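/- For multidegree d = (d_1,...,d_p) ∈ Z_{≥0}^p with d_i > 0 for some 1 ≤ i ≤ p-1, every monomial of k[u_1,...,u_p,α] of multidegree d lies in the initial algebra in(A) (for any monomial order with α ≺ u_p), and the number of such monomials is d_p + 1. -/

import Mathlib

/-- The generating set `{u_1,…,u_{p-1}, u_p + α, u_1α,…,u_pα}` of the subalgebra
`A ⊆ k[u_1,…,u_p,α]` (variables 0-indexed, `X ⟨p⟩` is `α`). -/
noncomputable def genSet (k : Type*) [Field k] (p : ℕ) :
    Set (MvPolynomial (Fin (p + 1)) k) :=
  {f | ∃ i : ℕ, ∃ h : i < p - 1, f = MvPolynomial.X ⟨i, by omega⟩} ∪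
    {MvPolynomial.X ⟨p - 1, by omega⟩ + MvPolynomial.X ⟨p, by omega⟩} ∪
    {f | ∃ i : ℕ, ∃ h : i < p,
      f = MvPolynomial.X ⟨i, by omega⟩ * MvPolynomial.X ⟨p, by omega⟩}

/-- The `ℤ^p`-multidegree of an exponent vector on `k[u_1,…,u_p,α]`:
`deg u_i = ε_i` and `deg α = ε_p`. -/
def Dmap (p : ℕ) (σ : Fin (p + 1) →₀ ℕ) : Fin p → ℕ := fun i =>
  if h : (i : ℕ) < p - 1 then σ ⟨(i : ℕ), by omega⟩
  else σ ⟨p - 1, by omega⟩ + σ ⟨p, by omega⟩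

/-!
Write `σ = μ + b • e_{u_p}` with `μ` free of `u_p`. Some `u_i` with `i < p - 1` divides `x^μ`, so
`x^μ = (u_i α^a) · ∏ u_j^{c_j}` lies in `A`, because `u_i α^j ∈ A` for all `j` by the recursion
`u_i α^{j+2} = u_i α^{j+1} (u_p + α) - u_i α^j (u_p α)`. Hence `x^μ (u_p + α)^b ∈ A`, and `α ≺ u_p`
makes `x^μ u_p^b = x^σ` its leading monomial. For the count, the multidegree fixes every exponent
except how `d_p` is split between `u_p` and `α`.
-/

open MvPolynomial Finsupp

theorem rel_nsmul_of_rel {M : Type*} [AddCommMonoid M] {r : M → M → Prop} [IsTrans M r]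
    (hadd : ∀ a b c, r a b → r (a + c) (b + c)) {x y : M} (h : r x y) {n : ℕ} (hn : n ≠ 0) :
    r (n • x) (n • y) := by
  obtain ⟨m, rfl⟩ := Nat.exists_eq_add_one_of_ne_zero hn
  clear hn
  induction m with
  | zero => simpa
  | succ m ih =>
    rw [succ_nsmul _ (m + 1), succ_nsmul _ (m + 1)]
    refine _root_.trans (hadd _ _ x ih) ?_
    simpa only [add_comm _ ((m + 1) • y)] using hadd x y ((m + 1) • y) h

section LeadingExponent

variable {ι R : Type*} [CommRing R] (r : (ι →₀ ℕ) → (ι →₀ ℕ) → Prop)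

def IsLeadingExponent (f : MvPolynomial ι R) (σ : ι →₀ ℕ) : Prop :=
  σ ∈ f.support ∧ ∀ τ ∈ f.support, τ ≠ σ → r τ σ

variable {r}

theorem IsLeadingExponent.monomial_one_mul (hadd : ∀ a b c, r a b → r (a + c) (b + c))
    {g : MvPolynomial ι R} {σ : ι →₀ ℕ} (hg : IsLeadingExponent r g σ) (μ : ι →₀ ℕ) :
    IsLeadingExponent r (monomial μ 1 * g) (μ + σ) := by
  refine ⟨by simpa using hg.1, fun τ hτ hne => ?_⟩
  rw [MvPolynomial.mem_support_iff, coeff_monomial_mul'] at hτ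
  split_ifs at hτ with hμ
  · rw [← add_tsub_cancel_of_le hμ] at hne ⊢
    simpa only [add_comm μ] using
      hadd _ _ μ (hg.2 _ (by simpa using hτ) fun h => hne (by rw [h]))
  · exact absurd rfl hτ

theorem support_X_add_X_pow_subset [DecidableEq ι] (a b : ι) (n : ℕ) :
    ((X a + X b : MvPolynomial ι R) ^ n).support ⊆
      (Finset.range (n + 1)).image fun j => single a j + single b (n - j) := by
  rw [add_pow]
  refine support_sum.trans (Finset.biUnion_subset.2 fun j hj => ?_)
  rw [X_pow_eq_monomial, X_pow_eq_monomial, monomial_mul, ← C_eq_coe_nat, mul_comm,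
    C_mul_monomial]
  exact support_monomial_subset.trans
    (Finset.singleton_subset_iff.2 (Finset.mem_image_of_mem _ hj))

theorem coeff_single_X_add_X_pow [Nontrivial R] {a b : ι} (hab : a ≠ b) (n : ℕ) :
    coeff (single a n) ((X a + X b : MvPolynomial ι R) ^ n) = 1 := by
  classical
  obtain ⟨q, hq⟩ := sub_dvd_pow_sub_pow (X a + X b : MvPolynomial ι R) (X a) n
  rw [add_sub_cancel_left] at hq
  rw [← sub_add_cancel ((X a + X b) ^ n) (X a ^ n), hq, coeff_add, coeff_X_mul',
    if_neg (by simp [hab.symm]), coeff_X_pow, if_pos rfl, zero_add]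

theorem isLeadingExponent_X_add_X_pow [IsTrans (ι →₀ ℕ) r] [Nontrivial R]
    (hadd : ∀ a b c, r a b → r (a + c) (b + c)) {a b : ι} (hab : a ≠ b)
    (hr : r (single b 1) (single a 1)) (n : ℕ) :
    IsLeadingExponent r ((X a + X b : MvPolynomial ι R) ^ n) (single a n) := by
  classical
  refine ⟨by simp [MvPolynomial.mem_support_iff, coeff_single_X_add_X_pow hab],
    fun τ hτ hne => ?_⟩
  obtain ⟨j, hj, rfl⟩ := Finset.mem_image.1 (support_X_add_X_pow_subset a b n hτ)
  have hjn : j < n := by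
    refine lt_of_le_of_ne (Nat.lt_succ_iff.1 (Finset.mem_range.1 hj)) fun h => hne ?_
    simp [h]
  have hsplit : single a n = single a j + single a (n - j) := by
    rw [← single_add, Nat.add_sub_cancel' hjn.le]
  have key := rel_nsmul_of_rel hadd hr (n := n - j) (by omega)
  simp only [smul_single, smul_eq_mul, mul_one] at key
  rw [hsplit]
  simpa only [add_comm (single a j)] using hadd _ _ (single a j) key

end LeadingExponent

theorem monomial_one_mem_adjoin {ι R : Type*} [CommRing R] {S : Set (MvPolynomial ι R)}
    {ν : ι →₀ ℕ} (h : ∀ i ∈ ν.support, X i ∈ S) : monomial ν (1 : R) ∈ Algebra.adjoin R S := by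
  rw [monomial_eq, map_one, one_mul]
  exact Subalgebra.prod_mem _ fun i hi => pow_mem (Algebra.subset_adjoin (h i hi)) _

theorem ncard_setOf_eq_off_pair_and_add_eq {ι : Type*} [Finite ι] [DecidableEq ι] {a b : ι}
    (hab : a ≠ b) (g : ι → ℕ) (n : ℕ) :
    {σ : ι →₀ ℕ | (∀ i, i ≠ a → i ≠ b → σ i = g i) ∧ σ a + σ b = n}.ncard = n + 1 := by
  refine Set.ncard_eq_of_bijective
    (fun j _ => equivFunOnFinite.symm (Function.update (Function.update g a (n - j)) b j))
    (fun σ ⟨hσ, hsum⟩ => ⟨σ b, by omega, ?_⟩) (fun j hj => ?_) (fun i j _ _ h => ?_)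
  · ext i
    by_cases hia : i = a
    · subst hia; simp [hab]; omega
    by_cases hib : i = b
    · subst hib; simp
    simp [hia, hib, hσ i hia hib]
  · simp only [Set.mem_ofPred_eq, coe_equivFunOnFinite_symm, Function.update_self,
      Function.update_of_ne hab]
    exact ⟨fun i hia hib => by simp [hia, hib], by omega⟩
  · simpa using DFunLike.congr_fun h b

section Generators

variable {k : Type*} [Field k] {p : ℕ}

theorem X_mem_genSet {i : Fin (p + 1)} (hi : (i : ℕ) < p - 1) : X i ∈ genSet k p :=
  Or.inl (Or.inl ⟨i, hi, rfl⟩)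

theorem X_add_X_last_mem_adjoin_genSet :
    (X ⟨p - 1, by omega⟩ + X (Fin.last p) : MvPolynomial (Fin (p + 1)) k) ∈
      Algebra.adjoin k (genSet k p) :=
  Algebra.subset_adjoin (Or.inl (Or.inr rfl))

theorem X_mul_X_last_mem_adjoin_genSet {i : Fin (p + 1)} (hi : (i : ℕ) < p) :
    (X i * X (Fin.last p) : MvPolynomial (Fin (p + 1)) k) ∈ Algebra.adjoin k (genSet k p) :=
  Algebra.subset_adjoin (Or.inr ⟨i, hi, rfl⟩)

theorem X_mul_X_last_pow_mem_adjoin_genSet {i : Fin (p + 1)} (hi : (i : ℕ) < p - 1) (j : ℕ) :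
    (X i * X (Fin.last p) ^ j : MvPolynomial (Fin (p + 1)) k) ∈
      Algebra.adjoin k (genSet k p) := by
  induction j using Nat.twoStepInduction with
  | zero => simpa using Algebra.subset_adjoin (X_mem_genSet hi)
  | one => simpa using X_mul_X_last_mem_adjoin_genSet (k := k) (i := i) (by omega)
  | more j ih₀ ih₁ =>
    have hrec : (X i * X (Fin.last p) ^ (j + 2) : MvPolynomial (Fin (p + 1)) k) =
        X i * X (Fin.last p) ^ (j + 1) * (X ⟨p - 1, by omega⟩ + X (Fin.last p)) -
          X i * X (Fin.last p) ^ j * (X ⟨p - 1, by omega⟩ * X (Fin.last p)) := by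
      ring
    rw [hrec]
    exact sub_mem (mul_mem ih₁ X_add_X_last_mem_adjoin_genSet)
      (mul_mem ih₀ (X_mul_X_last_mem_adjoin_genSet (i := ⟨p - 1, by omega⟩) (by simp; omega)))

theorem monomial_one_mem_adjoin_genSet {μ : Fin (p + 1) →₀ ℕ} (hμ : μ ⟨p - 1, by omega⟩ = 0)
    {i : Fin (p + 1)} (hi : (i : ℕ) < p - 1) (hμi : μ i ≠ 0) :
    monomial μ (1 : k) ∈ Algebra.adjoin k (genSet k p) := by
  have hil : i ≠ Fin.last p := by rintro rfl; simp at hi; omega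
  set ν := μ.erase (Fin.last p) - single i 1
  have hμ_eq : μ = single i 1 + single (Fin.last p) (μ (Fin.last p)) + ν := by
    ext j
    simp only [ν, Finsupp.add_apply, Finsupp.tsub_apply, erase_apply, single_apply]
    split_ifs <;> subst_vars <;> omega
  have hν : ∀ j ∈ ν.support, X j ∈ genSet k p := by
    intro j hj
    have hj' : ν j ≠ 0 := Finsupp.mem_support_iff.1 hj
    refine X_mem_genSet ?_
    have hjl : j ≠ Fin.last p := by rintro rfl; simp [ν] at hj'
    have hju : (j : ℕ) ≠ p - 1 := by
      intro h
      rw [show j = ⟨p - 1, by omega⟩ from Fin.ext h] at hj' hjl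
      simp [ν, erase_ne hjl, hμ] at hj'
    have := Fin.val_lt_last hjl
    omega
  have hsplit : monomial μ (1 : k) = X i * X (Fin.last p) ^ μ (Fin.last p) * monomial ν 1 := by
    rw [← pow_one (X i), X_pow_eq_monomial, X_pow_eq_monomial, monomial_mul, monomial_mul,
      one_mul, one_mul, ← hμ_eq]
  rw [hsplit]
  exact mul_mem (X_mul_X_last_pow_mem_adjoin_genSet hi _) (monomial_one_mem_adjoin hν)

theorem exists_isLeadingExponent_mem_adjoin_genSet
    (r : (Fin (p + 1) →₀ ℕ) → (Fin (p + 1) →₀ ℕ) → Prop) [IsTrans _ r]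
    (hadd : ∀ a b c, r a b → r (a + c) (b + c))
    (halpha : r (single (Fin.last p) 1) (single ⟨p - 1, by omega⟩ 1))
    {σ : Fin (p + 1) →₀ ℕ} {i : Fin (p + 1)} (hi : (i : ℕ) < p - 1) (hσi : σ i ≠ 0) :
    ∃ f ∈ Algebra.adjoin k (genSet k p), IsLeadingExponent r f σ := by
  set u : Fin (p + 1) := ⟨p - 1, by omega⟩
  have hu : u ≠ Fin.last p := Fin.ne_of_val_ne (by simp only [u, Fin.val_last]; omega)
  have hiu : i ≠ u := Fin.ne_of_val_ne (by simp only [u]; omega)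
  refine ⟨monomial (σ.erase u) 1 * (X u + X (Fin.last p)) ^ σ u,
    mul_mem (monomial_one_mem_adjoin_genSet (by simp [u]) hi (by rwa [erase_ne hiu]))
      (pow_mem X_add_X_last_mem_adjoin_genSet _), ?_⟩
  simpa only [erase_add_single] using
    (isLeadingExponent_X_add_X_pow hadd hu halpha (σ u)).monomial_one_mul hadd (σ.erase u)

end Generators

theorem Dmap_apply_of_lt {p : ℕ} (σ : Fin (p + 1) →₀ ℕ) {i : Fin p} (hi : (i : ℕ) < p - 1) :
    Dmap p σ i = σ ⟨i, by omega⟩ :=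
  dif_pos hi

/-- The `else` branch is never taken: it only concerns the excluded index `Fin.last p`. -/
theorem setOf_Dmap_eq {p : ℕ} (hp : 0 < p) (d : Fin p → ℕ) :
    {σ : Fin (p + 1) →₀ ℕ | Dmap p σ = d} =
      {σ | (∀ i, i ≠ ⟨p - 1, by omega⟩ → i ≠ Fin.last p →
          σ i = if h : (i : ℕ) < p then d ⟨i, h⟩ else 0) ∧
        σ ⟨p - 1, by omega⟩ + σ (Fin.last p) = d ⟨p - 1, by omega⟩} := by
  ext σ
  simp only [Set.mem_ofPred_eq, funext_iff, Dmap]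
  constructor
  · intro h
    constructor
    · intro i hiu hil
      have hi : (i : ℕ) < p - 1 := by
        have := Fin.val_lt_last hil
        have : (i : ℕ) ≠ p - 1 := fun h => hiu (Fin.ext h)
        omega
      simpa [hi, show (i : ℕ) < p by omega] using h ⟨i, by omega⟩
    · have hlast := h ⟨p - 1, by omega⟩
      rwa [dif_neg (by simp)] at hlast
  · rintro ⟨hfix, hsum⟩ i
    split_ifs with hi
    · simpa [show (i : ℕ) < p by omega] using hfix ⟨i, by omega⟩ (by simp [Fin.ext_iff]; omega)
        (by simp [Fin.ext_iff]; omega)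
    · obtain rfl : i = ⟨p - 1, Nat.sub_lt hp one_pos⟩ := by ext; simp; omega
      exact hsum

/-- for any multidegree `d` with `d_i > 0` for some `i ≤ p-1`, every
monomial of multidegree `d` is the leading monomial of an element of `A` (i.e. lies in
the initial algebra `in(A)`, for any monomial order with `α ≺ u_p`), and the number of
monomials of multidegree `d` is `d_p + 1`. -/
theorem stmt9 (k : Type*) [Field k] (p : ℕ) (hp : 3 ≤ p)
    (r : (Fin (p + 1) →₀ ℕ) → (Fin (p + 1) →₀ ℕ) → Prop) [IsStrictTotalOrder _ r]
    (hadd : ∀ a b c, r a b → r (a + c) (b + c))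
    (halpha : r (Finsupp.single (⟨p, by omega⟩ : Fin (p + 1)) 1)
      (Finsupp.single (⟨p - 1, by omega⟩ : Fin (p + 1)) 1))
    (d : Fin p → ℕ) (hd : ∃ i : Fin p, (i : ℕ) < p - 1 ∧ 0 < d i) :
    (∀ σ : Fin (p + 1) →₀ ℕ, Dmap p σ = d →
      ∃ f ∈ Algebra.adjoin k (genSet k p), f ≠ 0 ∧ σ ∈ f.support ∧
        ∀ τ ∈ f.support, τ ≠ σ → r τ σ) ∧
    Set.ncard {σ : Fin (p + 1) →₀ ℕ | Dmap p σ = d} = d ⟨p - 1, by omega⟩ + 1 := by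
  obtain ⟨i, hi, hdi⟩ := hd
  refine ⟨fun σ hσ => ?_, ?_⟩
  · have hσi : σ ⟨i, by omega⟩ ≠ 0 := by rw [← Dmap_apply_of_lt σ hi, hσ]; exact hdi.ne'
    obtain ⟨f, hf, hσf, hlead⟩ :=
      exists_isLeadingExponent_mem_adjoin_genSet (k := k) r hadd halpha (i := ⟨i, by omega⟩) hi hσi
    exact ⟨f, hf, by rintro rfl; simp at hσf, hσf, hlead⟩
  · rw [setOf_Dmap_eq (by omega), ncard_setOf_eq_off_pair_and_add_eq]
    exact Fin.ne_of_val_ne (by simp only [Fin.val_last]; omega)
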